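/- arXiv:1807.08278 — 3 statements merged into one kernel-verified Lean document; each statement's English description precedes it below -/
import Mathlib

section
/- For Δ > 0, T > 0 and all t ∈ [0,T]: √Δ · ∫_0^t sinh(√Δ(T−t))/cosh(√Δ(T−s)) ds ≤ 1. -/
open Real

lemma aux_arctan (x : ℝ) (hx : 0 ≤ x) : x * (π / 2 - Real.arctan x) ≤ 1 := by
  rcases hx.eq_or_lt with h | h
  · rw [← h]; norm_num
  · rw [← Real.arctan_inv_of_pos h]
    have hinv : 0 < x⁻¹ := inv_pos.2 h
    have harc : Real.arctan x⁻¹ < x⁻¹ := by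
      have h1 : 0 < Real.arctan x⁻¹ := by simpa [Real.arctan_zero] using Real.arctan_strictMono hinv
      have h2 : Real.arctan x⁻¹ < π / 2 := Real.arctan_lt_pi_div_two _
      have := Real.lt_tan h1 h2
      rwa [Real.tan_arctan] at this
    calc x * Real.arctan x⁻¹ ≤ x * x⁻¹ :=
          mul_le_mul_of_nonneg_left harc.le hx
      _ = 1 := mul_inv_cancel₀ h.ne'

theorem integral_sinh_div_cosh_le_one (Δ T t : ℝ) (hΔ : 0 < Δ) (hT : 0 < T)
    (ht : t ∈ Set.Icc (0:ℝ) T) :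
    Real.sqrt Δ *
        ∫ s in (0:ℝ)..t,
          Real.sinh (Real.sqrt Δ * (T - t)) / Real.cosh (Real.sqrt Δ * (T - s))
      ≤ 1 := by
  obtain ⟨ht0, htT⟩ := ht
  set a := Real.sqrt Δ with ha_def
  have ha : 0 < a := Real.sqrt_pos.2 hΔ
  have hderiv : ∀ s ∈ Set.uIcc (0:ℝ) t,
      HasDerivAt (fun s => -(a⁻¹ * Real.arctan (Real.sinh (a * (T - s)))))
        ((Real.cosh (a * (T - s)))⁻¹) s := by
    intro s _
    have h1 : HasDerivAt (fun s : ℝ => a * (T - s)) (-a) s := by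
      simpa using ((hasDerivAt_id s).const_sub T).const_mul a
    have h2 := (Real.hasDerivAt_sinh (a * (T - s))).comp s h1
    have h3 := (Real.hasDerivAt_arctan (Real.sinh (a * (T - s)))).comp s h2
    have h4 := (h3.const_mul a⁻¹).neg
    refine h4.congr_deriv ?_
    have hc := Real.cosh_pos (a * (T - s))
    have hsq : 1 + Real.sinh (a * (T - s)) ^ 2 = Real.cosh (a * (T - s)) ^ 2 := by
      rw [Real.cosh_sq]; ring
    rw [hsq]
    field_simp
  have hcont : ContinuousOn (fun s => (Real.cosh (a * (T - s)))⁻¹) (Set.uIcc (0:ℝ) t) := by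
    apply ContinuousOn.inv₀
    · exact (Real.continuous_cosh.comp (by continuity)).continuousOn
    · intro s _; exact (Real.cosh_pos _).ne'
  have key : (∫ s in (0:ℝ)..t, (Real.cosh (a * (T - s)))⁻¹) =
      a⁻¹ * (Real.arctan (Real.sinh (a * T)) - Real.arctan (Real.sinh (a * (T - t)))) := by
    rw [intervalIntegral.integral_eq_sub_of_hasDerivAt hderiv
      (hcont.intervalIntegrable)]
    simp only [sub_zero]
    ring
  have hint : (∫ s in (0:ℝ)..t,
      Real.sinh (a * (T - t)) / Real.cosh (a * (T - s))) =
      Real.sinh (a * (T - t)) * ∫ s in (0:ℝ)..t, (Real.cosh (a * (T - s)))⁻¹ := by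
    simp only [div_eq_mul_inv]
    exact intervalIntegral.integral_const_mul _ _
  rw [hint, key]
  have hb : 0 ≤ a * (T - t) := mul_nonneg ha.le (by linarith)
  have hsb : 0 ≤ Real.sinh (a * (T - t)) := Real.sinh_nonneg_iff.2 hb
  have heq : a * (Real.sinh (a * (T - t)) *
      (a⁻¹ * (Real.arctan (Real.sinh (a * T)) - Real.arctan (Real.sinh (a * (T - t)))))) =
      Real.sinh (a * (T - t)) *
      (Real.arctan (Real.sinh (a * T)) - Real.arctan (Real.sinh (a * (T - t)))) := by
    field_simp
  rw [heq]
  calc Real.sinh (a * (T - t)) *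
      (Real.arctan (Real.sinh (a * T)) - Real.arctan (Real.sinh (a * (T - t))))
      ≤ Real.sinh (a * (T - t)) * (π / 2 - Real.arctan (Real.sinh (a * (T - t)))) := by
        apply mul_le_mul_of_nonneg_left _ hsb
        have := Real.arctan_lt_pi_div_two (Real.sinh (a * T))
        linarith
    _ ≤ 1 := aux_arctan _ hsb
end

section
/- For Δ > 0, T > 0 and t ∈ [0,T]: √Δ · ∫_0^t sinh(√Δ(T−t))/cosh(√Δ(T−s)) ds ≥ 1 − e^{−√Δ t} − 2 e^{−2√Δ(T−t)}. -/
open Real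

set_option maxHeartbeats 1000000 in
theorem integral_sinh_div_cosh_lower_bound (Δ T t : ℝ) (hΔ : 0 < Δ) (hT : 0 < T)
    (ht : t ∈ Set.Icc (0:ℝ) T) :
    Real.sqrt Δ *
        ∫ s in (0:ℝ)..t,
          Real.sinh (Real.sqrt Δ * (T - t)) / Real.cosh (Real.sqrt Δ * (T - s))
      ≥ 1 - Real.exp (-(Real.sqrt Δ) * t) - 2 * Real.exp (-2 * Real.sqrt Δ * (T - t)) := by
  obtain ⟨ht0, htT⟩ := ht
  set a := Real.sqrt Δ with ha_def
  have ha : 0 < a := Real.sqrt_pos.mpr hΔ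
  have hx : 0 ≤ a * (T - t) := mul_nonneg ha.le (by linarith)
  set S := Real.sinh (a * (T - t)) with hS_def
  have hS0 : 0 ≤ S := Real.sinh_nonneg_iff.mpr hx
  -- pointwise lower bound for integrand
  have key : ∀ s ∈ Set.Icc (0:ℝ) t,
      S * (2 * Real.exp (-(a*(T-s))) - 2 * Real.exp (-(3*(a*(T-s))))) ≤
      S / Real.cosh (a*(T-s)) := by
    intro s _
    set y := a * (T - s) with hy_def
    have hc : 0 < Real.cosh y := Real.cosh_pos y
    have hpe : Real.exp (-y) * Real.exp y = 1 := by rw [← Real.exp_add]; simp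
    have h3 : Real.exp (-(3*y)) = Real.exp (-y)^3 := by
      rw [show -(3*y) = -y + (-y + -y) by ring, Real.exp_add, Real.exp_add]; ring
    have h1 : (2 * Real.exp (-y) - 2 * Real.exp (-(3*y))) * Real.cosh y ≤ 1 := by
      rw [Real.cosh_eq, h3]
      nlinarith [hpe, Real.exp_pos (-y), pow_nonneg (Real.exp_pos (-y)).le 4,
        sq_nonneg (Real.exp (-y)^2)]
    have hb : 2 * Real.exp (-y) - 2 * Real.exp (-(3*y)) ≤ (Real.cosh y)⁻¹ := by
      rw [← one_div]
      exact (le_div_iff₀ hc).mpr h1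
    rw [div_eq_mul_inv]
    exact mul_le_mul_of_nonneg_left hb hS0
  -- integrability
  have hcont1 : Continuous fun s : ℝ => S / Real.cosh (a*(T-s)) := by
    apply Continuous.div continuous_const
    · exact Real.continuous_cosh.comp (by continuity)
    · intro s; exact (Real.cosh_pos _).ne'
  have hcont2 : Continuous fun s : ℝ =>
      S * (2 * Real.exp (-(a*(T-s))) - 2 * Real.exp (-(3*(a*(T-s))))) := by
    continuity
  -- FTC: compute the lower integral
  have hderiv : ∀ s ∈ Set.uIcc (0:ℝ) t,
      HasDerivAt (fun s => S * ((2/a) * Real.exp (-(a*(T-s))) -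
          (2/(3*a)) * Real.exp (-(3*(a*(T-s))))))
        (S * (2 * Real.exp (-(a*(T-s))) - 2 * Real.exp (-(3*(a*(T-s)))))) s := by
    intro s _
    have hinner : HasDerivAt (fun s : ℝ => -(a*(T-s))) a s := by
      have h := ((hasDerivAt_id s).const_mul a).sub_const (a*T)
      have e : (fun s : ℝ => -(a*(T-s))) = fun x => a * id x - a * T := by
        funext u; simp only [id]; ring
      rw [e]; exact h.congr_deriv (by ring)
    have hinner3 : HasDerivAt (fun s : ℝ => -(3*(a*(T-s)))) (3*a) s := by
      have h := ((hasDerivAt_id s).const_mul (3*a)).sub_const (3*a*T)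
      have e : (fun s : ℝ => -(3*(a*(T-s)))) = fun x => 3 * a * id x - 3 * a * T := by
        funext u; simp only [id]; ring
      rw [e]; exact h.congr_deriv (by ring)
    have h1 := (hinner.exp.const_mul (2/a)).sub (hinner3.exp.const_mul (2/(3*a)))
    have h2 := h1.const_mul S
    refine h2.congr_deriv ?_
    field_simp
  have hint2' : IntervalIntegrable (fun s : ℝ =>
      S * (2 * Real.exp (-(a*(T-s))) - 2 * Real.exp (-(3*(a*(T-s)))))) MeasureTheory.volume 0 t :=
    hcont2.intervalIntegrable 0 t
  have hFTC := intervalIntegral.integral_eq_sub_of_hasDerivAt hderiv hint2'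
  have hmono := intervalIntegral.integral_mono_on ht0
    hint2' (hcont1.intervalIntegrable 0 t) key
  rw [hFTC] at hmono
  -- now the algebra
  set u := Real.exp (-(a*(T-t))) with hu_def
  set v := Real.exp (-(a*t)) with hv_def
  have hu0 : 0 < u := Real.exp_pos _
  have hv0 : 0 < v := Real.exp_pos _
  have hu1 : u ≤ 1 := Real.exp_le_one_iff.mpr (by linarith [hx])
  have hv1 : v ≤ 1 := Real.exp_le_one_iff.mpr (by nlinarith [mul_nonneg ha.le ht0])
  have huv : Real.exp (-(a*(T-0))) = u * v := by
    rw [hu_def, hv_def, ← Real.exp_add]; ring_nf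
  have hu3 : Real.exp (-(3*(a*(T-t)))) = u^3 := by
    rw [hu_def, show -(3*(a*(T-t))) = -(a*(T-t)) + (-(a*(T-t)) + -(a*(T-t))) by ring,
      Real.exp_add, Real.exp_add]; ring
  have huv3 : Real.exp (-(3*(a*(T-0)))) = (u*v)^3 := by
    rw [show -(3*(a*(T-0))) = -(a*(T-0)) + (-(a*(T-0)) + -(a*(T-0))) by ring,
      Real.exp_add, Real.exp_add, huv]; ring
  have hSu : 2 * S * u = 1 - u^2 := by
    rw [hS_def, Real.sinh_eq, hu_def]
    have : Real.exp (a*(T-t)) * Real.exp (-(a*(T-t))) = 1 := by rw [← Real.exp_add]; simp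
    nlinarith [this]
  have hgv : Real.exp (-a * t) = v := by rw [hv_def]; ring_nf
  have hgu2 : Real.exp (-2 * a * (T-t)) = u^2 := by
    rw [hu_def, show (-2) * a * (T-t) = -(a*(T-t)) + -(a*(T-t)) by ring, Real.exp_add]; ring
  rw [ge_iff_le, hgv, hgu2]
  rw [huv, hu3, huv3] at hmono
  have ha' : a ≠ 0 := ha.ne'
  clear_value S u v a
  have hstep : 1 - v - 2*u^2 ≤ a * (S * ((2/a) * u - (2/(3*a)) * u^3) -
      S * ((2/a) * (u*v) - (2/(3*a)) * (u*v)^3)) := by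
    have e1 : a * (S * ((2/a) * u - (2/(3*a)) * u^3) -
        S * ((2/a) * (u*v) - (2/(3*a)) * (u*v)^3)) =
        S * u * (2*(1 - v)) - S * u * ((2/3) * u^2 * (1 - v^3)) := by
      have h2a : a * (2/a) = 2 := by field_simp
      have h23 : a * (2/(3*a)) = 2/3 := by field_simp
      linear_combination (S*u - S*(u*v)) * h2a - (S*u^3 - S*u^3*v^3) * h23
    rw [e1]
    have e2 : S * u * (2*(1-v)) = (1 - u^2) * (1 - v) := by
      linear_combination (1 - v) * hSu
    have e3 : S * u * ((2/3) * u^2 * (1-v^3)) = (1 - u^2) * u^2 * (1-v^3) / 3 := by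
      linear_combination (u^2 * (1-v^3) / 3) * hSu
    rw [e2, e3]
    nlinarith [mul_nonneg (mul_nonneg hu0.le hu0.le) hv0.le,
      mul_nonneg (sub_nonneg.mpr hu1) hu0.le, sq_nonneg u, sq_nonneg (u*v),
      mul_nonneg (mul_nonneg hu0.le hu0.le) (mul_nonneg hv0.le (mul_nonneg hv0.le hv0.le)),
      mul_nonneg (mul_nonneg (mul_nonneg hu0.le hu0.le) (mul_nonneg hu0.le hu0.le)) (sub_nonneg.mpr (pow_le_one₀ hv0.le hv1 : v^3 ≤ 1))]
  exact le_trans hstep (mul_le_mul_of_nonneg_left hmono ha.le)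
end

section
/- Let Δ > 0, T > 0 and ξ ∈ ℝ be a constant. Then U(t) := (1/Δ)·∫_0^t k^Δ(s,t) · (∫_s^T k^Δ(s,r) ξ dr) ds equals (1 − cosh(√Δ(T−t))/cosh(√Δ T)) · ξ, where k^Δ(t,s) = Δ cosh(√Δ(T−s))/cosh(√Δ(T−t)). In particular U(0) = 0, U is increasing on [0,T] for ξ > 0, and U(T) = (1 − 1/cosh(√Δ T))·ξ < ξ. -/
open Real

theorem constant_target_open_market_position (Δ T ξ : ℝ) (hΔ : 0 < Δ) (hT : 0 < T)
    (k : ℝ → ℝ → ℝ)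
    (hk : ∀ t s, k t s = Δ * Real.cosh (Real.sqrt Δ * (T - s)) /
      Real.cosh (Real.sqrt Δ * (T - t)))
    (U : ℝ → ℝ)
    (hU : ∀ t, U t = (1 / Δ) * ∫ s in (0:ℝ)..t, k s t * ∫ r in s..T, k s r * ξ) :
    (∀ t ∈ Set.Icc (0:ℝ) T,
        U t = (1 - Real.cosh (Real.sqrt Δ * (T - t)) / Real.cosh (Real.sqrt Δ * T)) * ξ) ∧
      U 0 = 0 ∧
      (0 < ξ → StrictMonoOn U (Set.Icc 0 T)) ∧
      U T = (1 - 1 / Real.cosh (Real.sqrt Δ * T)) * ξ ∧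
      (0 < ξ → U T < ξ) := by
  have ha : 0 < Real.sqrt Δ := Real.sqrt_pos.2 hΔ
  set a := Real.sqrt Δ with ha_def
  have haΔ : a ^ 2 = Δ := Real.sq_sqrt hΔ.le
  have hane : a ≠ 0 := ha.ne'
  have hcne : ∀ x : ℝ, Real.cosh x ≠ 0 := fun x => (Real.cosh_pos x).ne'
  -- inner integral
  have hlin : ∀ r : ℝ, HasDerivAt (fun r : ℝ => a * (T - r)) (-a) r := by
    intro r
    have h := ((hasDerivAt_id r).const_sub T).const_mul a
    simpa using h
  have hinner : ∀ s : ℝ, (∫ r in s..T, Real.cosh (a * (T - r)))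
      = Real.sinh (a * (T - s)) / a := by
    intro s
    have hderiv : ∀ r ∈ Set.uIcc s T,
        HasDerivAt (fun r => -Real.sinh (a * (T - r)) / a) (Real.cosh (a * (T - r))) r := by
      intro r _
      have h2 := (Real.hasDerivAt_sinh (a * (T - r))).comp r (hlin r)
      have h3 := h2.neg.div_const a
      exact h3.congr_deriv (by field_simp)
    have hcont : Continuous fun r : ℝ => Real.cosh (a * (T - r)) :=
      Real.continuous_cosh.comp (by fun_prop)
    rw [intervalIntegral.integral_eq_sub_of_hasDerivAt hderiv
      (hcont.intervalIntegrable _ _)]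
    simp [Real.sinh_zero]
    ring
  -- outer antiderivative
  have houter : ∀ t : ℝ, (∫ s in (0:ℝ)..t,
      Real.sinh (a * (T - s)) / Real.cosh (a * (T - s)) ^ 2)
      = ((Real.cosh (a * (T - t)))⁻¹ - (Real.cosh (a * T))⁻¹) / a := by
    intro t
    have hderiv : ∀ s ∈ Set.uIcc (0:ℝ) t,
        HasDerivAt (fun s => (Real.cosh (a * (T - s)))⁻¹ / a)
          (Real.sinh (a * (T - s)) / Real.cosh (a * (T - s)) ^ 2) s := by
      intro s _
      have h1 := (Real.hasDerivAt_cosh (a * (T - s))).comp s (hlin s)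
      have h2 := (h1.inv (hcne _)).div_const a
      exact h2.congr_deriv (by simp only [Function.comp_apply]; field_simp)
    have hcont : Continuous fun s : ℝ => Real.sinh (a * (T - s)) / Real.cosh (a * (T - s)) ^ 2 :=
      (Real.continuous_sinh.comp (by fun_prop)).div
        ((Real.continuous_cosh.comp (by fun_prop)).pow 2)
        (fun s => pow_ne_zero 2 (hcne _))
    rw [intervalIntegral.integral_eq_sub_of_hasDerivAt hderiv
      (hcont.intervalIntegrable _ _)]
    ring
  -- formula for U
  have hUf : ∀ t : ℝ, U t = (1 - Real.cosh (a * (T - t)) / Real.cosh (a * T)) * ξ := by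
    intro t
    have hin : ∀ s : ℝ, (∫ r in s..T, k s r * ξ)
        = a * ξ * Real.sinh (a * (T - s)) / Real.cosh (a * (T - s)) := by
      intro s
      have heq : ∀ r : ℝ, k s r * ξ
          = (Δ / Real.cosh (a * (T - s)) * ξ) * Real.cosh (a * (T - r)) := by
        intro r; rw [hk]; ring
      simp only [heq]
      rw [intervalIntegral.integral_const_mul, hinner s]
      field_simp
      rw [← haΔ]
    have heq2 : ∀ s : ℝ, k s t * (a * ξ * Real.sinh (a * (T - s)) / Real.cosh (a * (T - s)))
        = (Δ * a * ξ * Real.cosh (a * (T - t)))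
          * (Real.sinh (a * (T - s)) / Real.cosh (a * (T - s)) ^ 2) := by
      intro s; rw [hk]
      field_simp
    rw [hU t]
    simp only [hin, heq2]
    rw [intervalIntegral.integral_const_mul, houter t]
    field_simp
  refine ⟨fun t _ => hUf t, ?_, ?_, ?_, ?_⟩
  · rw [hUf 0, show a * (T - 0) = a * T by ring, div_self (hcne _)]; ring
  · intro hξ t1 h1 t2 h2 h12
    rw [hUf t1, hUf t2]
    have hc : Real.cosh (a * (T - t2)) < Real.cosh (a * (T - t1)) := by
      rw [Real.cosh_lt_cosh]
      rw [abs_of_nonneg (by nlinarith [h1.1, h1.2, h2.1, h2.2] : (0:ℝ) ≤ a * (T - t2)),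
          abs_of_nonneg (by nlinarith [h1.1, h1.2] : (0:ℝ) ≤ a * (T - t1))]
      nlinarith [h2.2]
    have hC := Real.cosh_pos (a * T)
    have hx : Real.cosh (a * (T - t2)) / Real.cosh (a * T)
        < Real.cosh (a * (T - t1)) / Real.cosh (a * T) := by gcongr
    nlinarith [hx, hξ]
  · rw [hUf T]; simp
  · intro hξ
    rw [hUf T, show a * (T - T) = 0 by ring, Real.cosh_zero]
    have h1 : 1 < Real.cosh (a * T) := by
      rw [show (1:ℝ) = Real.cosh 0 by simp, Real.cosh_lt_cosh]
      simp [abs_of_pos (mul_pos ha hT), (mul_pos ha hT).ne']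
      positivity
    have h2 : 0 < 1 / Real.cosh (a * T) := by positivity
    nlinarith [h2, hξ]
end
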